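/- arXiv:2602.06045 — 2 statements merged into one kernel-verified Lean document; each statement's English description precedes it below -/
import Mathlib

section
/- Fix integers c ≥ 1 and k ≥ 0. Let (N1_j) be a sequence of integers ≥ 2 with smallest prime factors (p1_j), and let (p_j) be primes and (n_j) positive integers such that p_j^{n_j} = N1_j + k (or, uniformly in j, p_j^{n_j} = N1_j − k), such that K_j := min{p1_j − 1, p_j^{n_j}} ≥ 4 + c for every j, 1 ≤ c < p_j^{n_j} − 1, and p1_j → ∞ as j → ∞. Set N_j = N1_j · p_j^{n_j} and L_j = N1_j · (p_j^{n_j} − c). Then (i) K_j > 3·N_j/L_j for every j, and (ii) the optimality factor ρ_j = N_j / sqrt( N_j · L_j · ( 1 − 2·sqrt( N_j / (3·K_j·L_j) ) ) ) tends to 1 as j → ∞, i.e., the corresponding aperiodic DRCS sets are asymptotically optimal. -/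
open Filter

lemma aux_sqrt (a b x : ℝ) (ha : 0 < a) (hb : 0 < b) (hx : 0 < x) :
    a / Real.sqrt (a * b * x) = Real.sqrt ((a / b) / x) := by
  rw [show a * b * x = a * (b * x) by ring, Real.sqrt_mul ha.le,
      Real.sqrt_mul hb.le, Real.sqrt_div (by positivity), Real.sqrt_div ha.le]
  have h1 := Real.mul_self_sqrt ha.le
  have hsa := Real.sqrt_pos.mpr ha
  have hsb := Real.sqrt_pos.mpr hb
  have hsx := Real.sqrt_pos.mpr hx
  field_simp
  linear_combination (-1 : ℝ) * h1


/-- The optimality factor of an aperiodic `(K, N, L, N, Π)`-DRCS set with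
flock size `N`, sequence length `L`, `Z_x = Z_y = L` and `θ̂_max = N`, relative
to the aperiodic lower bound `θ̂_max ≥ sqrt(M·N·(1 − 2·sqrt(M/(3·K·Z_y))))`. -/
noncomputable def optFactor (K N L : ℕ) : ℝ :=
  (N : ℝ) / Real.sqrt ((N : ℝ) * L * (1 - 2 * Real.sqrt ((N : ℝ) / (3 * K * L))))

/-- fix `c ≥ 1` and `k ≥ 0`; for a family with
`p1_j` the smallest prime factor of `N1_j`, `p_j^{n_j} = N1_j + k` (or,
uniformly in `j`, `p_j^{n_j} + k = N1_j`), `K_j = min{p1_j − 1, p_j^{n_j}} ≥ 4 + c`,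
`1 ≤ c < p_j^{n_j} − 1` and `p1_j → ∞`, setting `N_j = N1_j·p_j^{n_j}` and
`L_j = N1_j·(p_j^{n_j} − c)`, we have (i) `K_j > 3·N_j/L_j` for every `j`, and
(ii) the optimality factor tends to `1`: the corresponding aperiodic DRCS sets
are asymptotically optimal. -/
theorem stmt18 (c k : ℕ) (hc : 1 ≤ c)
    (N1 p n p1 K L N : ℕ → ℕ)
    (hN1 : ∀ j, 2 ≤ N1 j) (hp : ∀ j, (p j).Prime) (hn : ∀ j, 0 < n j)
    (hp1 : ∀ j, p1 j = (N1 j).minFac)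
    (hpk : (∀ j, p j ^ n j = N1 j + k) ∨ (∀ j, p j ^ n j + k = N1 j))
    (hKdef : ∀ j, K j = min (p1 j - 1) (p j ^ n j))
    (hLdef : ∀ j, L j = N1 j * (p j ^ n j - c))
    (hNdef : ∀ j, N j = N1 j * p j ^ n j)
    (hKc : ∀ j, 4 + c ≤ K j)
    (hcb : ∀ j, c < p j ^ n j - 1)
    (hp1top : Tendsto (fun j => (p1 j : ℝ)) atTop atTop) :
    (∀ j, (3 : ℝ) * N j / L j < K j) ∧
      Tendsto (fun j => optFactor (K j) (N j) (L j)) atTop (nhds 1) := by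
  -- basic per-index facts
  have hq : ∀ j, c + 4 ≤ p j ^ n j := by
    intro j
    have h1 := hKc j
    have h2 : K j ≤ p j ^ n j := by rw [hKdef j]; exact min_le_right _ _
    omega
  have hNpos : ∀ j, 0 < N j := by
    intro j
    rw [hNdef j]
    exact Nat.mul_pos (by have := hN1 j; omega) (by have := hq j; omega)
  have hLpos : ∀ j, 0 < L j := by
    intro j
    rw [hLdef j]
    exact Nat.mul_pos (by have := hN1 j; omega) (by have := hq j; omega)
  have key : ∀ j, 3 * N j < K j * L j := by
    intro j
    have h2 : 4 + c ≤ K j := hKc j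
    have h3 := hq j
    have h4 := hN1 j
    rw [hNdef j, hLdef j]
    have hstep : 3 * p j ^ n j < K j * (p j ^ n j - c) := by
      have hd : 4 ≤ p j ^ n j - c := by omega
      have hsub : p j ^ n j - c + c = p j ^ n j := by omega
      nlinarith [Nat.mul_le_mul h2 (le_refl (p j ^ n j - c)),
        Nat.mul_le_mul (le_refl c) hd]
    calc 3 * (N1 j * p j ^ n j) = N1 j * (3 * p j ^ n j) := by ring
      _ < N1 j * (K j * (p j ^ n j - c)) :=
          mul_lt_mul_of_pos_left hstep (by omega)
      _ = K j * (N1 j * (p j ^ n j - c)) := by ring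
  have part1 : ∀ j, (3 : ℝ) * N j / L j < K j := by
    intro j
    have hL : (0 : ℝ) < L j := by exact_mod_cast hLpos j
    rw [div_lt_iff₀ hL]
    exact_mod_cast key j
  refine ⟨part1, ?_⟩
  -- positivity of the inner factor
  have hg9 : ∀ j, (N j : ℝ) / (3 * K j * L j) < 1 / 9 := by
    intro j
    have hK : (0 : ℝ) < K j := by
      have := hKc j; exact_mod_cast (by omega : 0 < K j)
    have hL : (0 : ℝ) < L j := by exact_mod_cast hLpos j
    have hkey : (3 : ℝ) * N j < K j * L j := by exact_mod_cast key j
    rw [div_lt_iff₀ (by positivity)]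
    nlinarith
  have hx0 : ∀ j, 0 < 1 - 2 * Real.sqrt ((N j : ℝ) / (3 * K j * L j)) := by
    intro j
    have h9 : Real.sqrt ((N j : ℝ) / (3 * K j * L j)) < 1 / 3 := by
      rw [Real.sqrt_lt' (by norm_num)]
      calc (N j : ℝ) / (3 * K j * L j) < 1 / 9 := hg9 j
        _ ≤ (1 / 3 : ℝ) ^ 2 := by norm_num
    linarith
  -- pointwise rewriting of the optimality factor
  have hpt : ∀ j, optFactor (K j) (N j) (L j) =
      Real.sqrt (((N j : ℝ) / L j) /
        (1 - 2 * Real.sqrt ((N j : ℝ) / (3 * K j * L j)))) := by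
    intro j
    have hN : (0 : ℝ) < N j := by exact_mod_cast hNpos j
    have hL : (0 : ℝ) < L j := by exact_mod_cast hLpos j
    exact aux_sqrt _ _ _ hN hL (hx0 j)
  -- limits
  have hminfac : ∀ j, p1 j ≤ p j ^ n j + k := by
    intro j
    have h0 : p1 j ≤ N1 j := by
      rw [hp1 j]; exact Nat.minFac_le (by have := hN1 j; omega)
    rcases hpk with h | h
    · have := h j; omega
    · have := h j; omega
  have hKlb : ∀ j, p1 j ≤ K j + (k + 1) := by
    intro j
    have h1 := hminfac j
    have h2 := hKdef j
    rcases Nat.le_total (p1 j - 1) (p j ^ n j) with h | h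
    · rw [min_eq_left h] at h2; omega
    · rw [min_eq_right h] at h2; omega
  have hK_top : Tendsto (fun j => (K j : ℝ)) atTop atTop := by
    apply tendsto_atTop_mono (fun j => ?_)
      (tendsto_atTop_add_const_right atTop (-((k : ℝ) + 1)) hp1top)
    have h1 : (p1 j : ℝ) ≤ (K j : ℝ) + ((k : ℝ) + 1) := by
      exact_mod_cast hKlb j
    linarith
  have hpn_top : Tendsto (fun j => (p j ^ n j : ℝ)) atTop atTop := by
    apply tendsto_atTop_mono (fun j => ?_)
      (tendsto_atTop_add_const_right atTop (-(k : ℝ)) hp1top)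
    have h1 : (p1 j : ℝ) ≤ (p j ^ n j : ℝ) + (k : ℝ) := by
      exact_mod_cast hminfac j
    linarith
  have hd_top : Tendsto (fun j => (p j ^ n j : ℝ) - c) atTop atTop := by
    have := tendsto_atTop_add_const_right atTop (-(c : ℝ)) hpn_top
    simpa [sub_eq_add_neg] using this
  have hf1eq : ∀ j, (N j : ℝ) / (L j : ℝ) = 1 + (c : ℝ) / ((p j ^ n j : ℝ) - c) := by
    intro j
    have h1 : (0 : ℝ) < N1 j := by
      have := hN1 j; exact_mod_cast (by omega : 0 < N1 j)
    have h2 : (0 : ℝ) < (p j ^ n j : ℝ) - c := by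
      have h := hq j
      have : ((c : ℝ) + 4) ≤ (p j ^ n j : ℝ) := by exact_mod_cast h
      linarith
    rw [hNdef j, hLdef j, Nat.cast_mul, Nat.cast_mul,
      Nat.cast_sub (by have := hq j; omega : c ≤ p j ^ n j)]
    push_cast
    field_simp
    ring
  have hf1 : Tendsto (fun j => (N j : ℝ) / (L j : ℝ)) atTop (nhds 1) := by
    have h : Tendsto (fun j => 1 + (c : ℝ) / ((p j ^ n j : ℝ) - c)) atTop
        (nhds (1 + 0)) :=
      tendsto_const_nhds.add (tendsto_const_nhds.div_atTop hd_top)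
    have h' := Tendsto.congr (fun j => (hf1eq j).symm) h
    simpa using h'
  have h3K_top : Tendsto (fun j => 3 * (K j : ℝ)) atTop atTop :=
    hK_top.const_mul_atTop (by norm_num)
  have hginv : Tendsto (fun j => (1 : ℝ) / (3 * (K j : ℝ))) atTop (nhds 0) :=
    tendsto_const_nhds.div_atTop h3K_top
  have hgeq : ∀ j, (N j : ℝ) / (3 * K j * L j) =
      ((N j : ℝ) / L j) * (1 / (3 * (K j : ℝ))) := by
    intro j
    have hK : ((K j : ℝ)) ≠ 0 := Nat.cast_ne_zero.mpr (by have := hKc j; omega)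
    have hL : ((L j : ℝ)) ≠ 0 := Nat.cast_ne_zero.mpr (by have := hLpos j; omega)
    field_simp
    try exact Or.inl trivial
  have hg : Tendsto (fun j => (N j : ℝ) / (3 * K j * L j)) atTop (nhds 0) := by
    have h := hf1.mul hginv
    have h' := Tendsto.congr (fun j => (hgeq j).symm) h
    simpa using h'
  have hsq : Tendsto (fun j => Real.sqrt ((N j : ℝ) / (3 * K j * L j))) atTop
      (nhds 0) := by
    have := (Real.continuous_sqrt.tendsto 0).comp hg
    simpa only [Function.comp_def, Real.sqrt_zero] using this
  have hx1 : Tendsto (fun j => 1 - 2 * Real.sqrt ((N j : ℝ) / (3 * K j * L j)))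
      atTop (nhds 1) := by
    have h2 : Tendsto (fun j => (1 : ℝ) - 2 * Real.sqrt ((N j : ℝ) / (3 * K j * L j)))
        atTop (nhds ((1 : ℝ) - 2 * 0)) :=
      Tendsto.sub tendsto_const_nhds (Tendsto.mul tendsto_const_nhds hsq)
    simpa using h2
  have hratio : Tendsto (fun j => ((N j : ℝ) / L j) /
      (1 - 2 * Real.sqrt ((N j : ℝ) / (3 * K j * L j)))) atTop (nhds 1) := by
    have := hf1.div hx1 one_ne_zero
    simpa [Pi.div_def] using this
  have hfinal := (Real.continuous_sqrt.tendsto 1).comp hratio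
  rw [Real.sqrt_one] at hfinal
  exact Tendsto.congr (fun j => (hpt j).symm) hfinal
end

section
/- Fix integers c ≥ 1 and k ≥ 0. Let (p_j) and (p1_j) be sequences of primes with |p1_j − p_j| = k for every j and p_j → ∞, and let (n_j), (n1_j) be positive integers such that K_j := min{p_j^{n_j}, p1_j^{n1_j}} ≥ 4 + c and 1 ≤ c < p1_j^{n1_j} − 1 for every j. Set N_j = p_j^{n_j} · p1_j^{n1_j} and L_j = (p_j^{n_j} − 1)(p1_j^{n1_j} − c). Then (i) K_j > 3·N_j/L_j for every j, and (ii) the optimality factor ρ_j = N_j / sqrt( N_j · L_j · ( 1 − 2·sqrt( N_j / (3·K_j·L_j) ) ) ) tends to 1 as j → ∞, i.e., the corresponding aperiodic DRCS sets are asymptotically optimal. -/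
open Filter

/-- Key arithmetic inequality: `16·A·B ≤ 5·K·(A−1)·(B−c)` under the standing
assumptions on the parameters. -/
lemma stmt19_key (A B Kr cr : ℝ) (hK : 5 ≤ Kr) (hA : Kr ≤ A) (hB : Kr ≤ B)
    (hc1 : 1 ≤ cr) (hcK : cr + 4 ≤ Kr) : 16*(A*B) ≤ 5*Kr*((A-1)*(B-cr)) := by
  have hA0 : (0:ℝ) < A := by linarith
  have hBc : (0:ℝ) ≤ B - cr := by linarith
  have h1 : (4/5)*Kr*A ≤ Kr*(A-1) := by nlinarith
  have h2 : 4*B ≤ Kr*(B-cr) := by nlinarith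
  nlinarith [mul_le_mul_of_nonneg_right h1 hBc, mul_le_mul_of_nonneg_left h2 hA0.le]


/-- Auxiliary algebraic identity used to compute the limit of `N/L`. -/
lemma stmt19_aux1 (A B cr : ℝ) (h1 : A - 1 ≠ 0) (h2 : B - cr ≠ 0) :
    (A*B) / ((A-1)*(B-cr)) = (1 + (A-1)⁻¹) * (1 + cr*(B-cr)⁻¹) := by
  field_simp
  ring

/-- Rewriting the optimality factor as `√(N/L)/√(1 − 2√(N/(3KL)))`. -/
lemma optFactor_eq (K N L : ℕ) (hN : (0:ℝ) < N) (hL : (0:ℝ) < L) :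
    optFactor K N L = Real.sqrt ((N:ℝ)/(L:ℝ)) /
      Real.sqrt (1 - 2 * Real.sqrt ((N : ℝ) / (3 * K * L))) := by
  set X : ℝ := 1 - 2 * Real.sqrt ((N : ℝ) / (3 * K * L)) with hXdef
  have hNLX : Real.sqrt ((N:ℝ)*(L:ℝ)*X) = Real.sqrt (N:ℝ) * Real.sqrt (L:ℝ) * Real.sqrt X := by
    rw [Real.sqrt_mul (by positivity : (0:ℝ) ≤ (N:ℝ)*L), Real.sqrt_mul hN.le]
  have hdiv : Real.sqrt ((N:ℝ)/(L:ℝ)) = Real.sqrt (N:ℝ) / Real.sqrt (L:ℝ) :=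
    Real.sqrt_div hN.le _
  have h1 : Real.sqrt (N:ℝ) * Real.sqrt (N:ℝ) = (N:ℝ) := Real.mul_self_sqrt hN.le
  rcases eq_or_ne (Real.sqrt X) 0 with h4 | h4
  · rw [optFactor, hdiv,
      show (N : ℝ) * (L:ℝ) * (1 - 2 * Real.sqrt ((N : ℝ) / (3 * (K:ℝ) * L))) = (N:ℝ)*(L:ℝ)*X
        from rfl, hNLX, h4, mul_zero, div_zero, div_zero]
  · have h2 : Real.sqrt (N:ℝ) ≠ 0 := by positivity
    have h3 : Real.sqrt (L:ℝ) ≠ 0 := by positivity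
    rw [optFactor,
      show (N : ℝ) * (L:ℝ) * (1 - 2 * Real.sqrt ((N : ℝ) / (3 * (K:ℝ) * L))) = (N:ℝ)*(L:ℝ)*X
        from rfl, hNLX, hdiv, div_div, div_eq_div_iff (by positivity)
        (by exact mul_ne_zero h3 h4 |> fun h => (mul_ne_zero h3 h4)) ]
    linear_combination (-1) * (Real.sqrt (L:ℝ) * Real.sqrt X) * h1

/-- fix `c ≥ 1` and `k ≥ 0`; for sequences of primes `p_j`,
`p1_j` with `|p1_j − p_j| = k` and `p_j → ∞`, and positive integers `n_j`,
`n1_j` with `K_j = min{p_j^{n_j}, p1_j^{n1_j}} ≥ 4 + c` and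
`1 ≤ c < p1_j^{n1_j} − 1`, setting `N_j = p_j^{n_j}·p1_j^{n1_j}` and
`L_j = (p_j^{n_j} − 1)(p1_j^{n1_j} − c)`, we have (i) `K_j > 3·N_j/L_j` for
every `j`, and (ii) the optimality factor tends to `1`: the corresponding
aperiodic DRCS sets are asymptotically optimal. -/
theorem stmt19 (c k : ℕ) (hc : 1 ≤ c)
    (p p1 n n1 K L N : ℕ → ℕ)
    (hp : ∀ j, (p j).Prime) (hp1 : ∀ j, (p1 j).Prime)
    (hn : ∀ j, 0 < n j) (hn1 : ∀ j, 0 < n1 j)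
    (hpk : ∀ j, |(p1 j : ℤ) - (p j : ℤ)| = k)
    (hptop : Tendsto (fun j => (p j : ℝ)) atTop atTop)
    (hKdef : ∀ j, K j = min (p j ^ n j) (p1 j ^ n1 j))
    (hLdef : ∀ j, L j = (p j ^ n j - 1) * (p1 j ^ n1 j - c))
    (hNdef : ∀ j, N j = p j ^ n j * p1 j ^ n1 j)
    (hKc : ∀ j, 4 + c ≤ K j)
    (hcb : ∀ j, c < p1 j ^ n1 j - 1) :
    (∀ j, (3 : ℝ) * N j / L j < K j) ∧
      Tendsto (fun j => optFactor (K j) (N j) (L j)) atTop (nhds 1) := by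
  -- basic per-j facts
  have hKa : ∀ j, K j ≤ p j ^ n j := fun j => (hKdef j) ▸ min_le_left _ _
  have hKb : ∀ j, K j ≤ p1 j ^ n1 j := fun j => (hKdef j) ▸ min_le_right _ _
  have hK5 : ∀ j, 5 ≤ K j := fun j => le_trans (by omega) (hKc j)
  have ha5 : ∀ j, 5 ≤ p j ^ n j := fun j => le_trans (hK5 j) (hKa j)
  have hb2 : ∀ j, c + 2 ≤ p1 j ^ n1 j := fun j => by have := hcb j; omega
  -- real-valued facts
  have hA : ∀ j, ((K j : ℝ)) ≤ ((p j ^ n j : ℕ) : ℝ) := fun j => Nat.cast_le.2 (hKa j)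
  have hB : ∀ j, ((K j : ℝ)) ≤ ((p1 j ^ n1 j : ℕ) : ℝ) := fun j => Nat.cast_le.2 (hKb j)
  have hK5' : ∀ j, (5:ℝ) ≤ K j := fun j => by exact_mod_cast hK5 j
  have hcK' : ∀ j, (c:ℝ) + 4 ≤ K j := fun j => by
    have := hKc j; push_cast; exact_mod_cast by omega
  have hc' : (1:ℝ) ≤ c := by exact_mod_cast hc
  have hLcast : ∀ j, (L j : ℝ) = (((p j ^ n j : ℕ):ℝ) - 1) * (((p1 j ^ n1 j : ℕ):ℝ) - c) := by
    intro j
    rw [hLdef j]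
    have h1 : 1 ≤ p j ^ n j := by have := ha5 j; omega
    have h2 : c ≤ p1 j ^ n1 j := by have := hb2 j; omega
    push_cast [Nat.cast_sub h1, Nat.cast_sub h2]
    ring
  have hNcast : ∀ j, (N j : ℝ) = ((p j ^ n j : ℕ):ℝ) * ((p1 j ^ n1 j : ℕ):ℝ) := by
    intro j; rw [hNdef j]; push_cast; ring
  have hLpos : ∀ j, (0:ℝ) < L j := by
    intro j; rw [hLcast j]
    have := hA j; have := hB j; have := hK5' j; have := hcK' j
    nlinarith
  have hNpos : ∀ j, (0:ℝ) < N j := by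
    intro j; rw [hNcast j]
    have := hA j; have := hB j; have := hK5' j
    nlinarith
  have hkey : ∀ j, 16 * ((N j:ℝ)) ≤ 5 * (K j:ℝ) * (L j:ℝ) := by
    intro j
    rw [hNcast j, hLcast j]
    have := stmt19_key _ _ _ _ (hK5' j) (hA j) (hB j) hc' (hcK' j)
    linarith
  have hKpos : ∀ j, (0:ℝ) < K j := fun j => by linarith [hK5' j]
  have part1 : ∀ j, (3 : ℝ) * N j / L j < K j := by
    intro j
    rw [div_lt_iff₀ (hLpos j)]
    nlinarith [hkey j, mul_pos (hKpos j) (hLpos j)]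
  refine ⟨part1, ?_⟩
  -- K j → ∞
  have hjK : ∀ j, p j ≤ K j + k := by
    intro j
    have h1 : p j ≤ p j ^ n j := Nat.le_self_pow (hn j).ne' _
    have h2 : p1 j ≤ p1 j ^ n1 j := Nat.le_self_pow (hn1 j).ne' _
    have h3 : (p j : ℤ) ≤ p1 j + k := by
      have h := hpk j
      have := neg_abs_le ((p1 j : ℤ) - (p j : ℤ))
      rw [h] at this; linarith
    have h3' : p j ≤ p1 j + k := by exact_mod_cast h3
    have := hKdef j
    omega
  have tK : Tendsto (fun j => (K j : ℝ)) atTop atTop := by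
    refine tendsto_atTop_mono (fun j => ?_) (tendsto_atTop_add_const_right atTop (-(k:ℝ)) hptop)
    have h := hjK j
    have h' : (p j : ℝ) ≤ (K j : ℝ) + k := by exact_mod_cast h
    linarith
  have ta : Tendsto (fun j => ((p j ^ n j : ℕ) : ℝ)) atTop atTop :=
    tendsto_atTop_mono hA tK
  have tb : Tendsto (fun j => ((p1 j ^ n1 j : ℕ) : ℝ)) atTop atTop :=
    tendsto_atTop_mono hB tK
  -- N/L → 1
  have hNL : ∀ j, (N j : ℝ) / (L j : ℝ) =
      (1 + (((p j ^ n j : ℕ):ℝ) - 1)⁻¹) * (1 + c * (((p1 j ^ n1 j : ℕ):ℝ) - c)⁻¹) := by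
    intro j
    have h1 : ((p j ^ n j : ℕ):ℝ) - 1 ≠ 0 := by have := hA j; have := hK5' j; nlinarith
    have h2 : ((p1 j ^ n1 j : ℕ):ℝ) - c ≠ 0 := by
      have := hB j; have := hcK' j; nlinarith
    rw [hNcast j, hLcast j]
    exact stmt19_aux1 _ _ _ h1 h2
  have tNL : Tendsto (fun j => (N j : ℝ) / (L j : ℝ)) atTop (nhds 1) := by
    have t1 : Tendsto (fun j => 1 + (((p j ^ n j : ℕ):ℝ) - 1)⁻¹) atTop (nhds (1 + 0)) :=
      tendsto_const_nhds.add
        ((tendsto_atTop_add_const_right atTop (-1:ℝ) ta).inv_tendsto_atTop)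
    have t2 : Tendsto (fun j => 1 + (c:ℝ) * (((p1 j ^ n1 j : ℕ):ℝ) - c)⁻¹) atTop
        (nhds (1 + c * 0)) :=
      tendsto_const_nhds.add (tendsto_const_nhds.mul
        ((tendsto_atTop_add_const_right atTop (-(c:ℝ)) tb).inv_tendsto_atTop))
    have t12 := t1.mul t2
    simp only [add_zero, mul_zero, mul_one] at t12
    exact t12.congr (fun j => (hNL j).symm)
  -- N/(3KL) → 0
  have hq : ∀ j, (N j : ℝ) / (3 * K j * L j) = ((N j : ℝ) / (L j : ℝ)) * (3 * (K j:ℝ))⁻¹ := by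
    intro j
    rw [← div_eq_mul_inv, div_div,
      show (L j:ℝ) * (3 * (K j:ℝ)) = 3 * (K j:ℝ) * (L j:ℝ) from by ring]
  have tq : Tendsto (fun j => (N j : ℝ) / (3 * K j * L j)) atTop (nhds 0) := by
    have t3K : Tendsto (fun j => (3:ℝ) * (K j : ℝ)) atTop atTop :=
      tK.const_mul_atTop (by norm_num)
    have t' := tNL.mul t3K.inv_tendsto_atTop
    simp only [mul_zero] at t'
    exact t'.congr (fun j => (hq j).symm)
  have ts : Tendsto (fun j => Real.sqrt ((N j : ℝ) / (3 * K j * L j))) atTop (nhds 0) := by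
    have := tq.sqrt
    simpa using this
  have tX : Tendsto (fun j => 1 - 2 * Real.sqrt ((N j : ℝ) / (3 * K j * L j))) atTop
      (nhds 1) := by
    have t' := (tendsto_const_nhds : Tendsto (fun _ : ℕ => (1:ℝ)) atTop (nhds 1)).sub
      (ts.const_mul (2:ℝ))
    simp only [mul_zero, sub_zero] at t'
    exact t'
  -- conclude
  have heq : ∀ j, optFactor (K j) (N j) (L j) =
      Real.sqrt ((N j:ℝ)/(L j:ℝ)) /
        Real.sqrt (1 - 2 * Real.sqrt ((N j : ℝ) / (3 * K j * L j))) :=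
    fun j => optFactor_eq _ _ _ (hNpos j) (hLpos j)
  have tfin := tNL.sqrt.div tX.sqrt (by simp)
  have hone : Real.sqrt 1 / Real.sqrt 1 = 1 := by simp
  rw [hone] at tfin
  exact tfin.congr (fun j => (heq j).symm)
end
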